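/- The properties of constant horospherical distortion and constant horospherical dilation are equivalent for a δ-hyperbolic space Y admitting a bounded parabolic action by a finitely generated group P: Y has constant horospherical distortion if and only if Y has constant horospherical dilation. -/

import Mathlib

open Metric Set

/-- The Gromov product `(y|z)_x`. -/
noncomputable def gromovProd {X : Type*} [MetricSpace X] (x y z : X) : ℝ :=
  (dist x y + dist x z - dist y z) / 2

/-- A unit-speed geodesic from `x` to `y`, defined on `[0, dist x y]`. -/
def IsGeodesicSeg {X : Type*} [MetricSpace X] (f : ℝ → X) (x y : X) : Prop :=
  f 0 = x ∧ f (dist x y) = y ∧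
    ∀ s ∈ Set.Icc (0:ℝ) (dist x y), ∀ t ∈ Set.Icc (0:ℝ) (dist x y),
      dist (f s) (f t) = |s - t|

/-- A geodesic metric space: any two points are joined by a geodesic. -/
def GeodesicSpace (X : Type*) [MetricSpace X] : Prop :=
  ∀ x y : X, ∃ f : ℝ → X, IsGeodesicSeg f x y

/-- A unit-speed geodesic ray, defined on `[0, ∞)`. -/
def IsGeodesicRay {X : Type*} [MetricSpace X] (c : ℝ → X) : Prop :=
  ∀ s ∈ Set.Ici (0:ℝ), ∀ t ∈ Set.Ici (0:ℝ), dist (c s) (c t) = |s - t|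

/-- Two geodesic rays are asymptotic if one stays at bounded distance from the other. -/
def AsympRays {X : Type*} [MetricSpace X] (c c' : ℝ → X) : Prop :=
  ∃ K : ℝ, ∀ t, 0 ≤ t → ∃ s, 0 ≤ s ∧ dist (c t) (c' s) ≤ K

/-- δ-hyperbolicity in the "equiradial" sense: on a geodesic triangle with vertices
`x,y,z`, points on the sides `[x,y]` and `[x,z]` that are equidistant from `x`, at distance
at most the Gromov product `(y|z)_x`, are at distance at most δ. -/
def GromovThin (X : Type*) [MetricSpace X] (δ : ℝ) : Prop :=
  ∀ (x y z : X) (f g : ℝ → X), IsGeodesicSeg f x y → IsGeodesicSeg g x z →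
    ∀ s : ℝ, 0 ≤ s → s ≤ gromovProd x y z → dist (f s) (g s) ≤ δ

/-- δ-thin triangles: each side of a geodesic triangle lies in the closed δ-neighborhood
of the union of the other two sides. -/
def ThinTriangles (X : Type*) [MetricSpace X] (δ : ℝ) : Prop :=
  ∀ (x y z : X) (fxy fyz fxz : ℝ → X),
    IsGeodesicSeg fxy x y → IsGeodesicSeg fyz y z → IsGeodesicSeg fxz x z →
    ∀ p ∈ fxy '' Set.Icc (0:ℝ) (dist x y),
      ∃ q ∈ (fyz '' Set.Icc (0:ℝ) (dist y z)) ∪ (fxz '' Set.Icc (0:ℝ) (dist x z)),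
        dist p q ≤ δ

/-- Word length of `p⁻¹ q` with respect to the (symmetrized) generating set `T`. -/
noncomputable def wordDist {P : Type*} [Group P] (T : Set P) (p q : P) : ℕ :=
  sInf {n : ℕ | ∃ w : List P, (∀ s ∈ w, s ∈ T ∨ s⁻¹ ∈ T) ∧ w.prod = p⁻¹ * q ∧ w.length = n}

/-- A bilipschitz homeomorphism of `[0,∞)`. -/
def BilipHomeo (f : ℝ → ℝ) : Prop :=
  ∃ L : ℝ, 1 ≤ L ∧
    (∀ s t : ℝ, 0 ≤ s → 0 ≤ t → L⁻¹ * |s - t| ≤ |f s - f t| ∧ |f s - f t| ≤ L * |s - t|) ∧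
    (∀ s, 0 ≤ s → 0 ≤ f s) ∧ (∀ u, 0 ≤ u → ∃ s, 0 ≤ s ∧ f s = u)

/-- Constant horospherical distortion: the word metric on `P` is comparable, with a
multiplicative constant `B`, to `exp ∘ g` of the distance between orbit points, for a
bilipschitz homeomorphism `g` of `[0,∞)`. -/
def ConstHoroDistortion {Y P : Type*} [MetricSpace Y] [Group P] [MulAction P Y]
    (T : Set P) (y₀ : Y) : Prop :=
  ∃ g : ℝ → ℝ, BilipHomeo g ∧ ∃ B : ℝ, 1 ≤ B ∧ ∀ p p' : P, p ≠ p' →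
    B⁻¹ * Real.exp (g (dist (p • y₀) (p' • y₀))) ≤ (wordDist T p p' : ℝ) ∧
    (wordDist T p p' : ℝ) ≤ B * Real.exp (g (dist (p • y₀) (p' • y₀)))

/-- Constant horospherical dilation with fellow-traveling constant `D`: for some
bilipschitz homeomorphism `f` of `[0,∞)` and some `A' > 0`,
(a) `d(p c(f t), p' c(f t)) ≤ D` implies `d_T(p,p') ≤ A' eᵗ`, and
(b) for every `A > 0` there is `D'` with `d_T(p,p') ≤ A eᵗ` implying
`d(p c(f t), p' c(f t)) ≤ D'`. -/
def ConstHoroDilation {Y P : Type*} [MetricSpace Y] [Group P] [MulAction P Y]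
    (T : Set P) (c : ℝ → Y) (D : ℝ) : Prop :=
  ∃ f : ℝ → ℝ, BilipHomeo f ∧ ∃ A' : ℝ, 0 < A' ∧
    (∀ (p p' : P) (t : ℝ), 0 ≤ t → p ≠ p' →
      dist (p • c (f t)) (p' • c (f t)) ≤ D → (wordDist T p p' : ℝ) ≤ A' * Real.exp t) ∧
    (∀ A : ℝ, 0 < A → ∃ D' : ℝ, ∀ (p p' : P) (t : ℝ), 0 ≤ t → p ≠ p' →
      (wordDist T p p' : ℝ) ≤ A * Real.exp t → dist (p • c (f t)) (p' • c (f t)) ≤ D')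

/-!
The rays `p • c` and `p' • c` are asymptotic, and two applications of thinness show that they
are `D`-close at every time `t ≥ d(p y₀, p' y₀) / 2 + D`; conversely, the triangle inequality
gives `d(p y₀, p' y₀) ≤ 2t + d(p c t, p' c t)`. So the time at which the two rays synchronize is
`d(p y₀, p' y₀) / 2` up to an additive constant, and the distortion function `g` and the dilation
function `f` correspond through `f t = g⁻¹(t) / 2`. Since both are bilipschitz, the additive
errors become multiplicative constants after exponentiation.
-/
namespace BilipHomeo

variable {f g : ℝ → ℝ}

lemma injOn (hf : BilipHomeo f) : InjOn f (Ici 0) := by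
  obtain ⟨L, hL, hbi, -, -⟩ := hf
  intro a ha b hb hab
  have h := (hbi a b ha hb).1
  rw [hab, sub_self, abs_zero] at h
  have hab' : |a - b| ≤ 0 := by nlinarith [abs_nonneg (a - b), inv_pos.mpr (by linarith : 0 < L)]
  linarith [abs_nonpos_iff.mp hab']

lemma nonneg (hf : BilipHomeo f) {s : ℝ} (hs : 0 ≤ s) : 0 ≤ f s := by
  obtain ⟨-, -, -, hpos, -⟩ := hf
  exact hpos s hs

lemma continuousOn (hf : BilipHomeo f) : ContinuousOn f (Ici 0) := by
  obtain ⟨L, hL, hbi, -, -⟩ := hf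
  refine LipschitzOnWith.continuousOn (K := L.toNNReal) ?_
  refine LipschitzOnWith.of_dist_le_mul fun x hx y hy => ?_
  rw [Real.dist_eq, Real.dist_eq, Real.coe_toNNReal L (by linarith)]
  exact (hbi x y hx hy).2

/-- Injectivity and continuity make `f` monotone or antitone on each `[0, b]`; surjectivity onto
`[0, ∞)` together with `0 ≤ f` rules out the antitone case. -/
lemma strictMonoOn (hf : BilipHomeo f) : StrictMonoOn f (Ici 0) := by
  obtain ⟨-, -, -, -, hsurj⟩ := id hf
  intro x hx y hy hxy
  obtain ⟨u, hu, hfu⟩ := hsurj (f 0 + 1) (by linarith [hf.nonneg le_rfl])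
  have hu_pos : 0 < u := hu.lt_of_ne (by rintro rfl; linarith)
  have hb : (0 : ℝ) ≤ max y u := hu.trans (le_max_right y u)
  rcases (hf.continuousOn.mono Icc_subset_Ici_self).strictMonoOn_of_injOn_Icc' hb
      (hf.injOn.mono Icc_subset_Ici_self) with hmono | hanti
  · exact hmono ⟨hx, hxy.le.trans (le_max_left y u)⟩ ⟨hy, le_max_left y u⟩ hxy
  · have := hanti ⟨le_rfl, hb⟩ ⟨hu, le_max_right y u⟩ hu_pos
    linarith

lemma monotoneOn (hf : BilipHomeo f) : MonotoneOn f (Ici 0) :=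
  hf.strictMonoOn.monotoneOn

lemma exists_le_add_mul (hf : BilipHomeo f) :
    ∃ L, 0 ≤ L ∧ ∀ a b e : ℝ, 0 ≤ a → 0 ≤ b → 0 ≤ e → a ≤ b + e → f a ≤ f b + L * e := by
  obtain ⟨L, hL, hbi, -, -⟩ := id hf
  refine ⟨L, by linarith, fun a b e ha hb he hab => ?_⟩
  have hlip := (hbi (b + e) b (by linarith) hb).2
  rw [add_sub_cancel_left, abs_of_nonneg he] at hlip
  calc f a ≤ f (b + e) := hf.monotoneOn ha (show (0 : ℝ) ≤ b + e by linarith) hab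
    _ ≤ f b + L * e := by linarith [le_abs_self (f (b + e) - f b)]

lemma apply_invFunOn (hf : BilipHomeo f) {u : ℝ} (hu : 0 ≤ u) :
    f (Function.invFunOn f (Ici 0) u) = u := by
  obtain ⟨-, -, -, -, hsurj⟩ := hf
  exact Function.invFunOn_eq (hsurj u hu)

lemma invFunOn_apply (hf : BilipHomeo f) {s : ℝ} (hs : 0 ≤ s) :
    Function.invFunOn f (Ici 0) (f s) = s :=
  hf.injOn.leftInvOn_invFunOn hs

lemma invFunOn (hf : BilipHomeo f) : BilipHomeo (Function.invFunOn f (Ici 0)) := by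
  obtain ⟨L, hL, hbi, hpos, hsurj⟩ := id hf
  have hmem : ∀ u : ℝ, 0 ≤ u → 0 ≤ Function.invFunOn f (Ici 0) u := fun u hu =>
    Function.invFunOn_mem (hsurj u hu)
  refine ⟨L, hL, fun s t hs ht => ?_, hmem, fun s hs => ⟨f s, hpos s hs, hf.invFunOn_apply hs⟩⟩
  have h := hbi _ _ (hmem s hs) (hmem t ht)
  rw [hf.apply_invFunOn hs, hf.apply_invFunOn ht] at h
  have hL0 : 0 < L := by linarith
  exact ⟨(inv_mul_le_iff₀ hL0).mpr h.2, (inv_mul_le_iff₀ hL0).mp h.1⟩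

lemma comp (hf : BilipHomeo f) (hg : BilipHomeo g) : BilipHomeo (f ∘ g) := by
  obtain ⟨L, hL, hbi, hpos, hsurj⟩ := hf
  obtain ⟨M, hM, hbi', hpos', hsurj'⟩ := hg
  refine ⟨L * M, one_le_mul_of_one_le_of_one_le hL hM, fun s t hs ht => ?_,
    fun s hs => hpos _ (hpos' s hs), fun u hu => ?_⟩
  · obtain ⟨h₁, h₂⟩ := hbi (g s) (g t) (hpos' s hs) (hpos' t ht)
    obtain ⟨h₁', h₂'⟩ := hbi' s t hs ht
    have hL0 : 0 ≤ L := by linarith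
    have hLi : 0 ≤ L⁻¹ := inv_nonneg.mpr hL0
    constructor
    · calc (L * M)⁻¹ * |s - t| = L⁻¹ * (M⁻¹ * |s - t|) := by rw [mul_inv]; ring
        _ ≤ L⁻¹ * |g s - g t| := mul_le_mul_of_nonneg_left h₁' hLi
        _ ≤ _ := h₁
    · calc |f (g s) - f (g t)| ≤ L * |g s - g t| := h₂
        _ ≤ L * (M * |s - t|) := mul_le_mul_of_nonneg_left h₂' hL0
        _ = L * M * |s - t| := by ring
  · obtain ⟨v, hv, rfl⟩ := hsurj u hu
    obtain ⟨s, hs, rfl⟩ := hsurj' v hv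
    exact ⟨s, hs, rfl⟩

end BilipHomeo

lemma bilipHomeo_const_mul {a : ℝ} (ha : 0 < a) : BilipHomeo (a * ·) := by
  refine ⟨max a a⁻¹, ?_, fun s t _ _ => ?_, fun s hs => by positivity,
    fun u hu => ⟨a⁻¹ * u, by positivity, by field_simp⟩⟩
  · rcases le_total 1 a with h | h
    · exact h.trans (le_max_left _ _)
    · exact (one_le_inv₀ ha |>.mpr h).trans (le_max_right _ _)
  · rw [← mul_sub, abs_mul, abs_of_pos ha]
    refine ⟨mul_le_mul_of_nonneg_right ?_ (abs_nonneg _),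
      mul_le_mul_of_nonneg_right (le_max_left _ _) (abs_nonneg _)⟩
    exact inv_le_of_inv_le₀ ha (le_max_right _ _)

lemma one_le_wordDist {P : Type*} [Group P] {T : Set P} (hT : Subgroup.closure T = ⊤)
    {p p' : P} (h : p ≠ p') : 1 ≤ wordDist T p p' := by
  have hmem : p⁻¹ * p' ∈ Submonoid.closure (T ∪ T⁻¹) := by
    rw [← Subgroup.closure_toSubmonoid, hT]; trivial
  obtain ⟨w, hw, hprod⟩ := Submonoid.exists_list_of_mem_closure hmem
  refine Nat.one_le_iff_ne_zero.mpr fun h0 => h ?_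
  rw [wordDist, Nat.sInf_eq_zero] at h0
  obtain ⟨w₀, -, hw₀, hlen⟩ :=
    h0.resolve_right (Set.nonempty_iff_ne_empty.mp ⟨_, w, hw, hprod, rfl⟩)
  rw [List.length_eq_zero_iff.mp hlen, List.prod_nil, eq_comm, inv_mul_eq_one] at hw₀
  exact hw₀

section Geodesic

variable {X : Type*} [MetricSpace X]

lemma gromovProd_le_dist (x y z : X) : gromovProd x y z ≤ dist x z := by
  unfold gromovProd
  linarith [dist_triangle x z y, dist_comm y z]

lemma IsGeodesicSeg.symm {f : ℝ → X} {x y : X} (h : IsGeodesicSeg f x y) :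
    IsGeodesicSeg (fun u => f (dist x y - u)) y x := by
  obtain ⟨h0, h1, hd⟩ := h
  rw [IsGeodesicSeg, dist_comm y x]
  refine ⟨by simpa using h1, by simpa using h0, fun s hs t ht => ?_⟩
  rw [hd _ ⟨by linarith [hs.2], by linarith [hs.1]⟩ _ ⟨by linarith [ht.2], by linarith [ht.1]⟩,
    abs_sub_comm]
  ring_nf

namespace IsGeodesicRay

variable {c : ℝ → X}

lemma dist_eq (hc : IsGeodesicRay c) {s t : ℝ} (hs : 0 ≤ s) (ht : 0 ≤ t) :
    dist (c s) (c t) = |s - t| :=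
  hc s hs t ht

lemma dist_zero (hc : IsGeodesicRay c) {t : ℝ} (ht : 0 ≤ t) : dist (c 0) (c t) = t := by
  rw [hc.dist_eq le_rfl ht, zero_sub, abs_neg, abs_of_nonneg ht]

lemma isGeodesicSeg (hc : IsGeodesicRay c) {t : ℝ} (ht : 0 ≤ t) :
    IsGeodesicSeg c (c 0) (c t) := by
  rw [IsGeodesicSeg, hc.dist_zero ht]
  exact ⟨rfl, rfl, fun s hs u hu => hc.dist_eq hs.1 hu.1⟩

lemma comp {Z : Type*} [MetricSpace Z] (hc : IsGeodesicRay c) {φ : X → Z} (hφ : Isometry φ) :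
    IsGeodesicRay (φ ∘ c) := fun s hs t ht => by
  rw [Function.comp_apply, Function.comp_apply, hφ.dist_eq]
  exact hc s hs t ht

end IsGeodesicRay

/-- Two applications of thinness, in the triangles `y x w` and `w y z`, joined through a geodesic
from `y` to `w`. -/
lemma GromovThin.exists_dist_le_two_mul {δ : ℝ} (hhyp : GromovThin X δ) (hgeo : GeodesicSpace X)
    {x y z w : X} {f g : ℝ → X} (hf : IsGeodesicSeg f y x) (hg : IsGeodesicSeg g z w) {t : ℝ}
    (ht : 0 ≤ t) (h₁ : t ≤ gromovProd y x w) (h₂ : dist y w - t ≤ gromovProd w y z) :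
    ∃ s, 0 ≤ s ∧ dist (f t) (g s) ≤ 2 * δ := by
  obtain ⟨h, hh⟩ := hgeo y w
  have hσ : 0 ≤ dist y w - t := by linarith [gromovProd_le_dist y x w]
  have hfh : dist (f t) (h t) ≤ δ := hhyp y x w f h hf hh t ht h₁
  have hhg := hhyp w y z _ _ hh.symm hg.symm _ hσ h₂
  rw [sub_sub_cancel, dist_comm z w] at hhg
  refine ⟨dist w z - (dist y w - t), by linarith [gromovProd_le_dist w y z], ?_⟩
  linarith [dist_triangle (f t) (h t) (g (dist w z - (dist y w - t)))]

lemma IsGeodesicRay.exists_dist_le_two_mul {δ : ℝ} (hhyp : GromovThin X δ)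
    (hgeo : GeodesicSpace X) {c c' : ℝ → X} (hc : IsGeodesicRay c) (hc' : IsGeodesicRay c')
    {N M t : ℝ} (hN : 0 ≤ N) (hM : 0 ≤ M) (ht : 0 ≤ t)
    (h₁ : 2 * t ≤ N + dist (c 0) (c' M) - dist (c N) (c' M))
    (h₂ : dist (c 0) (c' M) - 2 * t ≤ M - dist (c 0) (c' 0)) :
    ∃ s, 0 ≤ s ∧ dist (c t) (c' s) ≤ 2 * δ := by
  refine hhyp.exists_dist_le_two_mul hgeo (hc.isGeodesicSeg hN) (hc'.isGeodesicSeg hM) ht ?_ ?_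
  · unfold gromovProd
    rw [hc.dist_zero hN]
    linarith
  · unfold gromovProd
    rw [dist_comm (c' M), dist_comm (c' M), hc'.dist_zero hM]
    linarith

end Geodesic

section Synchronization

variable {Y P : Type*} [MetricSpace Y] [Group P] [MulAction P Y] [IsIsometricSMul P Y]
  {δ D : ℝ} {c : ℝ → Y}

lemma IsGeodesicRay.smul (hc : IsGeodesicRay c) (q : P) : IsGeodesicRay (fun s => q • c s) :=
  hc.comp (isometry_smul Y q)

lemma IsGeodesicRay.dist_smul_le (hc : IsGeodesicRay c) (p p' : P) {s t : ℝ} (hs : 0 ≤ s)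
    (ht : 0 ≤ t) : dist (p • c s) (p' • c s) ≤ dist (p • c t) (p' • c t) + 2 * |s - t| := by
  have hp : dist (p • c s) (p • c t) = |s - t| := by rw [dist_smul, hc.dist_eq hs ht]
  have hp' : dist (p' • c t) (p' • c s) = |s - t| := by
    rw [dist_smul, hc.dist_eq ht hs, abs_sub_comm]
  linarith [dist_triangle4 (p • c s) (p • c t) (p' • c t) (p' • c s)]

lemma IsGeodesicRay.dist_smul_zero_le (hc : IsGeodesicRay c) (p p' : P) {t : ℝ} (ht : 0 ≤ t) :
    dist (p • c 0) (p' • c 0) ≤ dist (p • c t) (p' • c t) + 2 * t := by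
  simpa [abs_of_nonneg ht] using hc.dist_smul_le p p' le_rfl ht

variable (hδ : 0 ≤ δ) (hhyp : GromovThin Y δ) (hgeo : GeodesicSpace Y) (hc : IsGeodesicRay c)
  (hft : ∀ (q : P) (t : ℝ), 0 ≤ t →
    (∃ s, 0 ≤ s ∧ dist (c t) (q • c s) ≤ 5 * δ) → dist (c t) (q • c t) ≤ D)
include hδ hhyp hgeo hc hft

/-- Since `q • c` is asymptotic to `c`, some `q • c s₀` is `K`-close to `c (t + K)`; the triangle
`c 0, c (t + K), q • c s₀` then brings `c t` within `2δ` of the ray `q • c`. -/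
lemma dist_smul_self_le_of_dist_le {q : P} (hasymp : AsympRays c (fun s => q • c s)) {t : ℝ}
    (ht : dist (c 0) (q • c 0) ≤ t) : dist (c t) (q • c t) ≤ D := by
  have ht0 : 0 ≤ t := dist_nonneg.trans ht
  obtain ⟨K, hK⟩ := hasymp
  have hK0 : 0 ≤ K := by
    obtain ⟨s, -, hs⟩ := hK 0 le_rfl
    exact dist_nonneg.trans hs
  have hN : 0 ≤ t + K := by positivity
  obtain ⟨s₀, hs₀, hK₀⟩ := hK (t + K) hN
  have hρ_lower : t + K ≤ dist (c 0) (q • c s₀) + K := by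
    linarith [hc.dist_zero hN, dist_triangle (c 0) (q • c s₀) (c (t + K)),
      dist_comm (q • c s₀) (c (t + K))]
  have hρ_upper : dist (c 0) (q • c s₀) ≤ dist (c 0) (q • c 0) + s₀ := by
    linarith [(hc.smul q).dist_zero hs₀, dist_triangle (c 0) (q • c 0) (q • c s₀)]
  obtain ⟨s, hs, hts⟩ := hc.exists_dist_le_two_mul hhyp hgeo (hc.smul q) hN hs₀ ht0
    (by linarith) (by linarith)
  exact hft q t ht0 ⟨s, hs, by linarith⟩

/-- First synchronize far out, at time `T = t + R + D`, then transfer back to time `t` through the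
triangle `c 0, c T, q • c T`. -/
lemma dist_smul_self_le {q : P} (hD : 0 ≤ D) (hasymp : AsympRays c (fun s => q • c s)) {t : ℝ}
    (ht : dist (c 0) (q • c 0) / 2 + D ≤ t) : dist (c t) (q • c t) ≤ D := by
  set R := dist (c 0) (q • c 0)
  have hR : 0 ≤ R := dist_nonneg
  have ht0 : 0 ≤ t := by linarith
  have hT : 0 ≤ t + R + D := by positivity
  have hsyncT : dist (c (t + R + D)) (q • c (t + R + D)) ≤ D :=
    dist_smul_self_le_of_dist_le hδ hhyp hgeo hc hft hasymp (by linarith)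
  have hρ_lower : t + R + D ≤ dist (c 0) (q • c (t + R + D)) + D := by
    linarith [hc.dist_zero hT, dist_triangle (c 0) (q • c (t + R + D)) (c (t + R + D)),
      dist_comm (q • c (t + R + D)) (c (t + R + D))]
  have hρ_upper : dist (c 0) (q • c (t + R + D)) ≤ t + R + D + D := by
    linarith [hc.dist_zero hT, dist_triangle (c 0) (c (t + R + D)) (q • c (t + R + D))]
  obtain ⟨s, hs, hts⟩ := hc.exists_dist_le_two_mul hhyp hgeo (hc.smul q) hT hT ht0
    (by linarith) (by linarith)
  exact hft q t ht0 ⟨s, hs, by linarith⟩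

lemma dist_smul_smul_le (hD : 0 ≤ D) (hasymp : ∀ q : P, AsympRays c (fun s => q • c s))
    (p p' : P) {t : ℝ} (ht : dist (p • c 0) (p' • c 0) / 2 + D ≤ t) :
    dist (p • c t) (p' • c t) ≤ D := by
  have hshift : ∀ y : Y, dist (p • y) (p' • y) = dist y ((p⁻¹ * p') • y) := fun y => by
    rw [← dist_smul p⁻¹, inv_smul_smul, mul_smul]
  rw [hshift] at ht ⊢
  exact dist_smul_self_le hδ hhyp hgeo hc hft hD (hasymp _) ht

end Synchronization

section Equivalence

variable {Y P : Type*} [MetricSpace Y] [Group P] [MulAction P Y] [IsIsometricSMul P Y]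
  {T : Set P} {D : ℝ} {c : ℝ → Y}

lemma IsGeodesicRay.dist_smul_le_of_sync (hc : IsGeodesicRay c) (hD : 0 ≤ D)
    (hsync : ∀ (p p' : P) (t : ℝ), dist (p • c 0) (p' • c 0) / 2 + D ≤ t →
      dist (p • c t) (p' • c t) ≤ D)
    {p p' : P} {u E : ℝ} (hu : 0 ≤ u) (hE : 0 ≤ E) (h : dist (p • c 0) (p' • c 0) ≤ 2 * u + E) :
    dist (p • c u) (p' • c u) ≤ E + 3 * D := by
  set v := dist (p • c 0) (p' • c 0) / 2 + D with hv_def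
  rcases le_total v u with hvu | huv
  · linarith [hsync p p' u hvu]
  · have hv : 0 ≤ v := hu.trans huv
    have := hc.dist_smul_le p p' hu hv
    rw [abs_of_nonpos (by linarith)] at this
    linarith [hsync p p' v le_rfl, hv_def]

variable (hc : IsGeodesicRay c) (hD : 0 ≤ D)
  (hsync : ∀ (p p' : P) (t : ℝ), dist (p • c 0) (p' • c 0) / 2 + D ≤ t →
    dist (p • c t) (p' • c t) ≤ D)
include hc hD hsync

lemma ConstHoroDistortion.constHoroDilation (h : ConstHoroDistortion T (c 0)) :
    ConstHoroDilation T c D := by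
  obtain ⟨g, hg, B, hB, hgW⟩ := h
  obtain ⟨L, hL, hgL⟩ := hg.exists_le_add_mul
  set gi := Function.invFunOn g (Ici 0)
  have hgi : BilipHomeo gi := hg.invFunOn
  obtain ⟨L', hL', hgiL⟩ := hgi.exists_le_add_mul
  have hB0 : 0 < B := by linarith
  refine ⟨fun t => 2⁻¹ * gi t, (bilipHomeo_const_mul (by norm_num)).comp hgi,
    B * Real.exp (L * D), by positivity, fun p p' t ht hne hd => ?_, fun A hA => ?_⟩
  · have hgit : 0 ≤ gi t := hgi.nonneg ht
    have hR := hc.dist_smul_zero_le p p' (by positivity : 0 ≤ 2⁻¹ * gi t)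
    have hgR : g (dist (p • c 0) (p' • c 0)) ≤ t + L * D := by
      rw [← hg.apply_invFunOn ht]
      exact hgL _ _ _ dist_nonneg hgit hD (by linarith)
    calc (wordDist T p p' : ℝ) ≤ B * Real.exp (g (dist (p • c 0) (p' • c 0))) := (hgW p p' hne).2
      _ ≤ B * Real.exp (t + L * D) := by gcongr
      _ = B * Real.exp (L * D) * Real.exp t := by rw [Real.exp_add]; ring
  · refine ⟨L' * |Real.log (A * B)| + 3 * D, fun p p' t ht hne hW => ?_⟩
    set R := dist (p • c 0) (p' • c 0)
    have hexp : Real.exp (g R) ≤ Real.exp (Real.log (A * B) + t) := by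
      rw [Real.exp_add, Real.exp_log (by positivity)]
      have := (hgW p p' hne).1
      rw [inv_mul_le_iff₀ hB0] at this
      nlinarith
    have hgR : g R ≤ t + |Real.log (A * B)| := by
      linarith [Real.exp_le_exp.mp hexp, le_abs_self (Real.log (A * B))]
    have hR : R ≤ gi t + L' * |Real.log (A * B)| :=
      calc R = gi (g R) := (hg.invFunOn_apply dist_nonneg).symm
        _ ≤ gi t + L' * |Real.log (A * B)| :=
          hgiL _ _ _ (hg.nonneg dist_nonneg) ht (abs_nonneg _) hgR
    exact hc.dist_smul_le_of_sync hD hsync (by positivity [hgi.nonneg ht])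
      (by positivity) (by linarith)

lemma ConstHoroDilation.constHoroDistortion (hT : Subgroup.closure T = ⊤)
    (h : ConstHoroDilation T c D) : ConstHoroDistortion T (c 0) := by
  obtain ⟨f, hf, A', hA', hfa, hfb⟩ := h
  set fi := Function.invFunOn f (Ici 0)
  have hfi : BilipHomeo fi := hf.invFunOn
  obtain ⟨L, hL, hfiL⟩ := hfi.exists_le_add_mul
  obtain ⟨D', hD'⟩ := hfb 1 one_pos
  refine ⟨fun x => fi (2⁻¹ * x), hfi.comp (bilipHomeo_const_mul (by norm_num)),
    max (A' * Real.exp (L * D)) (Real.exp (L * |D'|)),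
    le_max_of_le_right (Real.one_le_exp (by positivity)), fun p p' hne => ⟨?_, ?_⟩⟩
  · have hW : (1 : ℝ) ≤ wordDist T p p' := by exact_mod_cast one_le_wordDist hT hne
    set t := Real.log (wordDist T p p')
    have ht : 0 ≤ t := Real.log_nonneg hW
    have hexp : Real.exp t = wordDist T p p' := Real.exp_log (by linarith)
    have hd := hD' p p' t ht hne (by rw [one_mul, hexp])
    have hR := hc.dist_smul_zero_le p p' (hf.nonneg ht)
    have hfiR : fi (2⁻¹ * dist (p • c 0) (p' • c 0)) ≤ t + L * |D'| := by
      rw [← hf.invFunOn_apply ht]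
      exact hfiL _ _ _ (by positivity) (hf.nonneg ht) (abs_nonneg _)
        (by linarith [le_abs_self D', abs_nonneg D'])
    rw [inv_mul_le_iff₀ (by positivity)]
    calc Real.exp (fi (2⁻¹ * dist (p • c 0) (p' • c 0)))
        ≤ Real.exp t * Real.exp (L * |D'|) := by rw [← Real.exp_add]; gcongr
      _ ≤ _ := by rw [hexp, mul_comm]; gcongr; exact le_max_right _ _
  · set R := dist (p • c 0) (p' • c 0)
    have hR : 0 ≤ 2⁻¹ * R + D := by positivity
    set t := fi (2⁻¹ * R + D)
    have ht : 0 ≤ t := hfi.nonneg hR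
    have hd := hsync p p' (f t) (by rw [hf.apply_invFunOn hR]; linarith)
    have hft : t ≤ fi (2⁻¹ * R) + L * D := hfiL _ _ _ hR (by positivity) hD (by linarith)
    calc (wordDist T p p' : ℝ) ≤ A' * Real.exp t := hfa p p' t ht hne hd
      _ ≤ A' * Real.exp (fi (2⁻¹ * R) + L * D) := by gcongr
      _ = A' * Real.exp (L * D) * Real.exp (fi (2⁻¹ * R)) := by rw [Real.exp_add]; ring
      _ ≤ _ := by gcongr; exact le_max_left _ _

end Equivalence

theorem stmt_16_general {Y P : Type*} [MetricSpace Y] [Group P] [MulAction P Y]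
    (δ D : ℝ) (hδ : 0 ≤ δ) (hD : 0 ≤ D)
    (hgeo : GeodesicSpace Y) (hhyp : GromovThin Y δ)
    (hiso : ∀ (p : P) (a b : Y), dist (p • a) (p • b) = dist a b)
    (T : Set P) (hTgen : Subgroup.closure T = ⊤)
    (c : ℝ → Y) (hc : IsGeodesicRay c) (y₀ : Y) (hc0 : c 0 = y₀)
    -- every geodesic ray tends to the unique boundary point:
    (hone : ∀ c₁ c₂ : ℝ → Y, IsGeodesicRay c₁ → IsGeodesicRay c₂ → AsympRays c₁ c₂)
    -- `D` is the asynchronous-to-synchronous fellow-traveling constant: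
    (hDft : ∀ c' : ℝ → Y, IsGeodesicRay c' → ∀ (p : P) (t : ℝ), 0 ≤ t →
      (∃ s, 0 ≤ s ∧ dist (c' t) (p • c' s) ≤ 5 * δ) → dist (c' t) (p • c' t) ≤ D) :
    ConstHoroDistortion T y₀ ↔ ConstHoroDilation T c D := by
  subst hc0
  have : IsIsometricSMul P Y := ⟨fun p => Isometry.of_dist_eq (hiso p)⟩
  have hsync (p p' : P) (t : ℝ) (ht : dist (p • c 0) (p' • c 0) / 2 + D ≤ t) :
      dist (p • c t) (p' • c t) ≤ D :=
    dist_smul_smul_le hδ hhyp hgeo hc (hDft c hc) hD (fun q => hone _ _ hc (hc.smul q)) p p' ht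
  exact ⟨ConstHoroDistortion.constHoroDilation hc hD hsync,
    ConstHoroDilation.constHoroDistortion hc hD hsync hTgen⟩

/-- For a δ-hyperbolic space `Y` with one boundary point, admitting a bounded parabolic
action by a finitely generated group `P`, constant horospherical distortion and constant
horospherical dilation are equivalent. -/
theorem stmt_16 {Y P : Type*} [MetricSpace Y] [ProperSpace Y] [Group P] [MulAction P Y]
    (δ D : ℝ) (hδ : 0 ≤ δ) (hD : 0 ≤ D)
    (hgeo : GeodesicSpace Y) (hhyp : GromovThin Y δ)
    (hiso : ∀ (p : P) (a b : Y), dist (p • a) (p • b) = dist a b)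
    (T : Set P) (hTfin : T.Finite) (hTgen : Subgroup.closure T = ⊤)
    (c : ℝ → Y) (hc : IsGeodesicRay c) (y₀ : Y) (hc0 : c 0 = y₀)
    -- every geodesic ray tends to the unique boundary point:
    (hone : ∀ c₁ c₂ : ℝ → Y, IsGeodesicRay c₁ → IsGeodesicRay c₂ → AsympRays c₁ c₂)
    -- the action is bounded parabolic:
    (hbp : ∃ K : ℝ, ∀ y : Y, ∃ (p : P) (t : ℝ), 0 ≤ t ∧ dist y (p • c t) ≤ K)
    -- `D` is the asynchronous-to-synchronous fellow-traveling constant: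
    (hDft : ∀ c' : ℝ → Y, IsGeodesicRay c' → ∀ (p : P) (t : ℝ), 0 ≤ t →
      (∃ s, 0 ≤ s ∧ dist (c' t) (p • c' s) ≤ 5 * δ) → dist (c' t) (p • c' t) ≤ D) :
    ConstHoroDistortion T y₀ ↔ ConstHoroDilation T c D :=
  stmt_16_general δ D hδ hD hgeo hhyp hiso T hTgen c hc y₀ hc0 hone hDft
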